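/- arXiv:1604.06009 — 2 statements merged into one kernel-verified Lean document; each statement's English description precedes it below -/
import Mathlib

section
/- Let L be a finite lattice, Θ a lattice congruence of L, and x ∈ L the greatest element of its Θ-class. Then for every Θ-class [y]_Θ such that ([x]_Θ, [y]_Θ) is a covering pair of the quotient lattice L/Θ, there exists a unique y' ∈ [y]_Θ with x ⋖ y' in L. -/
universe u v

/-- A lattice congruence on a lattice `L`: an equivalence relation compatible with
meets and joins. -/
structure LatticeCon' (L : Type u) [Lattice L] : Type u where
  r : L → L → Prop
  refl : ∀ x, r x x
  symm : ∀ x y, r x y → r y x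
  trans : ∀ x y z, r x y → r y z → r x z
  inf_congr : ∀ x y z, r x y → r (x ⊓ z) (y ⊓ z)
  sup_congr : ∀ x y z, r x y → r (x ⊔ z) (y ⊔ z)

namespace LatticeCon'

variable {L : Type u} [Lattice L]

theorem ext' {c d : LatticeCon' L} (h : ∀ x y, c.r x y ↔ d.r x y) : c = d := by
  have hr : c.r = d.r := funext fun x => funext fun y => propext (h x y)
  cases c; cases d
  subst hr
  rfl

/-- Congruences are ordered by refinement. -/
instance : PartialOrder (LatticeCon' L) where
  le c d := ∀ x y : L, c.r x y → d.r x y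
  le_refl c := fun _ _ h => h
  le_trans a b c hab hbc := fun x y h => hbc x y (hab x y h)
  le_antisymm a b hab hba := ext' fun x y => ⟨hab x y, hba x y⟩

/-- The join of two congruences. -/
def conSup (c d : LatticeCon' L) : LatticeCon' L where
  r x y := ∀ e : LatticeCon' L, c ≤ e → d ≤ e → e.r x y
  refl := fun x e _ _ => e.refl x
  symm := fun x y h e hc hd => e.symm x y (h e hc hd)
  trans := fun x y z h h' e hc hd => e.trans x y z (h e hc hd) (h' e hc hd)
  inf_congr := fun x y z h e hc hd => e.inf_congr x y z (h e hc hd)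
  sup_congr := fun x y z h e hc hd => e.sup_congr x y z (h e hc hd)

/-- The meet of two congruences (their intersection). -/
def conInf (c d : LatticeCon' L) : LatticeCon' L where
  r x y := c.r x y ∧ d.r x y
  refl := fun x => ⟨c.refl x, d.refl x⟩
  symm := fun x y h => ⟨c.symm x y h.1, d.symm x y h.2⟩
  trans := fun x y z h h' => ⟨c.trans x y z h.1 h'.1, d.trans x y z h.2 h'.2⟩
  inf_congr := fun x y z h => ⟨c.inf_congr x y z h.1, d.inf_congr x y z h.2⟩
  sup_congr := fun x y z h => ⟨c.sup_congr x y z h.1, d.sup_congr x y z h.2⟩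

/-- The lattice `Con(L)` of congruences of `L`. -/
instance : Lattice (LatticeCon' L) where
  sup := conSup
  le_sup_left c d := fun x y h e hc _ => hc x y h
  le_sup_right c d := fun x y h e _ hd => hd x y h
  sup_le a b c hac hbc := fun x y h => h c hac hbc
  inf := conInf
  inf_le_left c d := fun _ _ h => h.1
  inf_le_right c d := fun _ _ h => h.2
  le_inf a b c hab hac := fun x y h => ⟨hab x y h, hac x y h⟩

/-- `conGen a b` is the finest lattice congruence identifying `a` and `b`. -/
def conGen (a b : L) : LatticeCon' L where
  r x y := ∀ e : LatticeCon' L, e.r a b → e.r x y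
  refl := fun x e _ => e.refl x
  symm := fun x y h e he => e.symm x y (h e he)
  trans := fun x y z h h' e he => e.trans x y z (h e he) (h' e he)
  inf_congr := fun x y z h e he => e.inf_congr x y z (h e he)
  sup_congr := fun x y z h e he => e.sup_congr x y z (h e he)

/-- The setoid underlying a lattice congruence. -/
def setoid (c : LatticeCon' L) : Setoid L :=
  ⟨c.r, ⟨c.refl, fun h => c.symm _ _ h, fun h h' => c.trans _ _ _ h h'⟩⟩

/-- The quotient of `L` by a lattice congruence. -/
def Quo (c : LatticeCon' L) : Type u := Quotient c.setoid

/-- The canonical quotient map `L → L/Θ`. -/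
def mkQ (c : LatticeCon' L) (x : L) : c.Quo := Quotient.mk c.setoid x

variable (c : LatticeCon' L)

theorem sup_congr₂ {x x' y y' : L} (hx : c.r x x') (hy : c.r y y') :
    c.r (x ⊔ y) (x' ⊔ y') := by
  have h1 : c.r (x ⊔ y) (x' ⊔ y) := c.sup_congr x x' y hx
  have h2 : c.r (y ⊔ x') (y' ⊔ x') := c.sup_congr y y' x' hy
  rw [sup_comm y x', sup_comm y' x'] at h2
  exact c.trans _ _ _ h1 h2

theorem inf_congr₂ {x x' y y' : L} (hx : c.r x x') (hy : c.r y y') :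
    c.r (x ⊓ y) (x' ⊓ y') := by
  have h1 : c.r (x ⊓ y) (x' ⊓ y) := c.inf_congr x x' y hx
  have h2 : c.r (y ⊓ x') (y' ⊓ x') := c.inf_congr y y' x' hy
  rw [inf_comm y x', inf_comm y' x'] at h2
  exact c.trans _ _ _ h1 h2

instance : Max c.Quo :=
  ⟨Quotient.lift₂ (fun x y => c.mkQ (x ⊔ y))
    (fun _ _ _ _ hx hy => Quotient.sound (c.sup_congr₂ hx hy))⟩

instance : Min c.Quo :=
  ⟨Quotient.lift₂ (fun x y => c.mkQ (x ⊓ y))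
    (fun _ _ _ _ hx hy => Quotient.sound (c.inf_congr₂ hx hy))⟩

theorem quo_sup_comm (a b : c.Quo) : a ⊔ b = b ⊔ a :=
  Quotient.inductionOn₂ a b fun x y => congrArg (Quotient.mk c.setoid) (sup_comm x y)

theorem quo_sup_assoc (a b d : c.Quo) : a ⊔ b ⊔ d = a ⊔ (b ⊔ d) :=
  Quotient.inductionOn₃ a b d fun x y z => congrArg (Quotient.mk c.setoid) (sup_assoc x y z)

theorem quo_inf_comm (a b : c.Quo) : a ⊓ b = b ⊓ a :=
  Quotient.inductionOn₂ a b fun x y => congrArg (Quotient.mk c.setoid) (inf_comm x y)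

theorem quo_inf_assoc (a b d : c.Quo) : a ⊓ b ⊓ d = a ⊓ (b ⊓ d) :=
  Quotient.inductionOn₃ a b d fun x y z => congrArg (Quotient.mk c.setoid) (inf_assoc x y z)

theorem quo_sup_inf_self (a b : c.Quo) : a ⊔ a ⊓ b = a :=
  Quotient.inductionOn₂ a b fun x y =>
    congrArg (Quotient.mk c.setoid) (sup_inf_self (a := x) (b := y))

theorem quo_inf_sup_self (a b : c.Quo) : a ⊓ (a ⊔ b) = a :=
  Quotient.inductionOn₂ a b fun x y =>
    congrArg (Quotient.mk c.setoid) (inf_sup_self (a := x) (b := y))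

/-- The quotient lattice `L/Θ`. -/
instance : Lattice c.Quo :=
  Lattice.mk' c.quo_sup_comm c.quo_sup_assoc c.quo_inf_comm c.quo_inf_assoc
    c.quo_sup_inf_self c.quo_inf_sup_self

end LatticeCon'

open LatticeCon' in
/-- A finite lattice is congruence-uniform if `j ↦ con(j₊, j)` is a bijection from
join-irreducibles of `L` onto join-irreducibles of `Con(L)`, and dually
`m ↦ con(m, m⁺)` is a bijection from meet-irreducibles of `L` onto
meet-irreducibles of `Con(L)`. -/
def IsCongruenceUniform (L : Type u) [Lattice L] : Prop :=
  (∀ j : L, SupIrred j → ∀ a : L, a ⋖ j → SupIrred (conGen a j)) ∧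
  (∀ j j' a a' : L, SupIrred j → SupIrred j' → a ⋖ j → a' ⋖ j' →
      conGen a j = conGen a' j' → j = j') ∧
  (∀ Θ : LatticeCon' L, SupIrred Θ → ∃ j a : L, SupIrred j ∧ a ⋖ j ∧ conGen a j = Θ) ∧
  (∀ m : L, InfIrred m → ∀ b : L, m ⋖ b → InfIrred (conGen m b)) ∧
  (∀ m m' b b' : L, InfIrred m → InfIrred m' → m ⋖ b → m' ⋖ b' →
      conGen m b = conGen m' b' → m = m') ∧
  (∀ Θ : LatticeCon' L, InfIrred Θ → ∃ m b : L, InfIrred m ∧ m ⋖ b ∧ conGen m b = Θ)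

/-- `C` is a maximal chain of the closed interval `[a, b]`. -/
def IsMaxChainIn {L : Type u} [Lattice L] (a b : L) (C : Set L) : Prop :=
  C ⊆ Set.Icc a b ∧ IsChain (· ≤ ·) C ∧
    ∀ D : Set L, D ⊆ Set.Icc a b → IsChain (· ≤ ·) D → C ⊆ D → C = D

/-- `u` and `v` are consecutive elements of the chain `C` (the covering pairs of `C`
viewed as a poset in its own right). -/
def ConsecIn {L : Type u} [Lattice L] (C : Set L) (u v : L) : Prop :=
  u ∈ C ∧ v ∈ C ∧ u < v ∧ ∀ w ∈ C, ¬(u < w ∧ w < v)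

/-- `lam` is a CN-labeling of the lattice `L` (with values in the poset `P`):
the defining conditions (CN1), (CN2), (CN3) hold in `L` and in its order-dual. -/
def IsCNLabeling {L : Type u} [Lattice L] {P : Type v} [PartialOrder P]
    (lam : L → L → P) : Prop :=
  (∀ x y z : L, x ≠ y → z ⋖ x → z ⋖ y →
    ∀ C₁ C₂ : Set L, IsMaxChainIn z (x ⊔ y) C₁ → IsMaxChainIn z (x ⊔ y) C₂ →
      x ∈ C₁ → y ∈ C₂ →
      (∀ x' ∈ C₁, x' ⋖ (x ⊔ y) → lam x' (x ⊔ y) = lam z y) ∧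
      (∀ y' ∈ C₂, y' ⋖ (x ⊔ y) → lam y' (x ⊔ y) = lam z x) ∧
      (∀ u v : L, ConsecIn C₁ u v → z < u → v < x ⊔ y →
        lam z x < lam u v ∧ lam z y < lam u v) ∧
      (∀ u v u' v' : L, ConsecIn C₁ u v → ConsecIn C₁ u' v' →
        lam u v = lam u' v' → u = u' ∧ v = v')) ∧
  (∀ x y z : L, x ≠ y → x ⋖ z → y ⋖ z →
    ∀ C₁ C₂ : Set L, IsMaxChainIn (x ⊓ y) z C₁ → IsMaxChainIn (x ⊓ y) z C₂ →
      x ∈ C₁ → y ∈ C₂ →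
      (∀ x' ∈ C₁, (x ⊓ y) ⋖ x' → lam (x ⊓ y) x' = lam y z) ∧
      (∀ y' ∈ C₂, (x ⊓ y) ⋖ y' → lam (x ⊓ y) y' = lam x z) ∧
      (∀ u v : L, ConsecIn C₁ u v → x ⊓ y < u → v < z →
        lam x z < lam u v ∧ lam y z < lam u v) ∧
      (∀ u v u' v' : L, ConsecIn C₁ u v → ConsecIn C₁ u' v' →
        lam u v = lam u' v' → u = u' ∧ v = v'))

/-- `lam` is a CU-labeling of the lattice `L`: a CN-labeling satisfying (CU1), (CU2). -/
def IsCULabeling {L : Type u} [Lattice L] {P : Type v} [PartialOrder P]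
    (lam : L → L → P) : Prop :=
  IsCNLabeling lam ∧
  (∀ j j' a a' : L, SupIrred j → SupIrred j' → a ⋖ j → a' ⋖ j' → j ≠ j' →
    lam a j ≠ lam a' j') ∧
  (∀ m m' b b' : L, InfIrred m → InfIrred m' → m ⋖ b → m' ⋖ b' → m ≠ m' →
    lam m b ≠ lam m' b')

/-- `λ↓(x)`: the set of labels of covering pairs below `x`. -/
def lamDown {L : Type u} [Lattice L] {P : Type v} (lam : L → L → P) (x : L) : Set P :=
  {p | ∃ y, y ⋖ x ∧ lam y x = p}

/-- `λ↑(x)`: the set of labels of covering pairs above `x`. -/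
def lamUp {L : Type u} [Lattice L] {P : Type v} (lam : L → L → P) (x : L) : Set P :=
  {p | ∃ y, x ⋖ y ∧ lam x y = p}

/-- Covering pairs `(x, y)` and `(w, z)` are associates. -/
def AreAssociates {L : Type u} [Lattice L] (x y w z : L) : Prop :=
  (y ⊓ w = x ∧ y ⊔ w = z) ∨ (x ⊓ z = w ∧ x ⊔ z = y)

/-- `x = ⋁ A` is the canonical join-representation of `x`. -/
def IsCanonicalJoinRep {L : Type u} [Lattice L] (A : Set L) (x : L) : Prop :=
  (∀ a ∈ A, SupIrred a) ∧ IsLUB A x ∧ (∀ B ⊂ A, ¬IsLUB B x) ∧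
    ∀ B : Set L, (∀ b ∈ B, SupIrred b) → IsLUB B x → (∀ B' ⊂ B, ¬IsLUB B' x) →
      ∀ a ∈ A, ∃ b ∈ B, a ≤ b

/-- `x = ⋀ A` is the canonical meet-representation of `x`. -/
def IsCanonicalMeetRep {L : Type u} [Lattice L] (A : Set L) (x : L) : Prop :=
  (∀ a ∈ A, InfIrred a) ∧ IsGLB A x ∧ (∀ B ⊂ A, ¬IsGLB B x) ∧
    ∀ B : Set L, (∀ b ∈ B, InfIrred b) → IsGLB B x → (∀ B' ⊂ B, ¬IsGLB B' x) →
      ∀ a ∈ A, ∃ b ∈ B, b ≤ a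


/-!
Existence: since `[y] ≰ [x]`, we have `x < x ⊔ y`, so some `y'` with `x ⋖ y' ≤ x ⊔ y` exists;
its class lies in `[[x], [y]]` and differs from `[x]` because `x` tops its class, hence equals
`[y]`. Uniqueness: two distinct covers `y', z` of `x` meet in `x`, so `y' ≡ z` would give
`x = y' ⊓ z ≡ z ⊓ z = z`, putting `z > x` in the class of `x`.
-/

theorem CovBy.inf_eq_of_ne {α : Type*} [Lattice α] {a b c : α} (hb : a ⋖ b) (hc : a ⋖ c)
    (hbc : b ≠ c) : b ⊓ c = a := by
  rcases hb.eq_or_eq (le_inf hb.le hc.le) inf_le_left with h | h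
  · exact h
  · rcases hc.eq_or_eq hb.le (inf_eq_left.mp h) with h' | h'
    · exact absurd h' hb.ne'
    · exact absurd h' hbc

namespace LatticeCon'

variable {L : Type*} [Lattice L] (c : LatticeCon' L)

theorem mkQ_eq_mkQ_iff {a b : L} : c.mkQ a = c.mkQ b ↔ c.r a b :=
  ⟨Quotient.exact, Quot.sound⟩

theorem mkQ_monotone : Monotone c.mkQ := fun _ _ hab =>
  sup_eq_right.mp (congrArg c.mkQ (sup_eq_right.mpr hab))

theorem lt_sup_of_mkQ_lt {x y : L} (hlt : c.mkQ x < c.mkQ y) : x < x ⊔ y :=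
  le_sup_left.lt_of_ne fun h => hlt.not_ge (sup_eq_left.mp (congrArg c.mkQ h.symm))

theorem rel_of_covBy_of_le_sup {x y z : L} (hx : ∀ w : L, c.r x w → w ≤ x)
    (hcov : c.mkQ x ⋖ c.mkQ y) (hxz : x ⋖ z) (hz : z ≤ x ⊔ y) : c.r y z := by
  have hzx : c.mkQ z ≠ c.mkQ x := fun h =>
    hxz.lt.not_ge (hx z ((c.mkQ_eq_mkQ_iff).mp h.symm))
  have hzy : c.mkQ z ≤ c.mkQ y := (c.mkQ_monotone hz).trans_eq (sup_eq_right.mpr hcov.le)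
  rcases hcov.eq_or_eq (c.mkQ_monotone hxz.le) hzy with h | h
  · exact absurd h hzx
  · exact (c.mkQ_eq_mkQ_iff).mp h.symm

theorem eq_of_covBy_of_rel {x y z : L} (hx : ∀ w : L, c.r x w → w ≤ x)
    (hy : x ⋖ y) (hz : x ⋖ z) (hyz : c.r y z) : y = z := by
  by_contra hne
  have hxz : c.r x z := by
    simpa only [hy.inf_eq_of_ne hz hne, inf_idem] using c.inf_congr y z z hyz
  exact hz.lt.not_ge (hx z hxz)

end LatticeCon'

/-- If `x` is the greatest element of its congruence class, then every
covering pair `([x], [y])` in the quotient lattice is represented by a unique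
cover `x ⋖ y'` with `y'` in the class of `y`. -/
theorem max_of_class_unique_cover_above
    {L : Type u} [Lattice L] [Fintype L] (c : LatticeCon' L)
    {x : L} (hx : ∀ z : L, c.r x z → z ≤ x)
    (y : L) (hcov : c.mkQ x ⋖ c.mkQ y) :
    ∃! y' : L, c.r y y' ∧ x ⋖ y' := by
  obtain ⟨y', hxy', hy'⟩ := exists_covBy_le_of_lt (c.lt_sup_of_mkQ_lt hcov.lt)
  have hyy' : c.r y y' := c.rel_of_covBy_of_le_sup hx hcov hxy' hy'
  refine ⟨y', ⟨hyy', hxy'⟩, fun z ⟨hyz, hxz⟩ => ?_⟩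
  exact c.eq_of_covBy_of_rel hx hxz hxy' (c.trans _ _ _ (c.symm _ _ hyz) hyy')
end

section
/- Let L be a finite lattice with a CU-labeling λ : Cov(L) → P. Let x ≤ y in L and suppose y = a₁ ∨ ⋯ ∨ a_l for pairwise distinct elements a₁, …, a_l each of which covers x. Then there exist elements c₁, …, c_l each covered by y such that x = c₁ ∧ ⋯ ∧ c_l and λ(x, a_i) = λ(c_i, y) for all i. -/
universe u v

/-
Transporting a label along (CN1) — from a cover `u ⋖ v` to the top edge of the
polygon spanned by `v` and another upper cover of `u`, and dually — ends at an edge `m ⋖ e` with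
`m` meet-irreducible, and at an edge `j₊ ⋖ j` with `j` join-irreducible. By (CU1) and (CU2) these
edges depend only on the label `ℓ = λ(x, a)`, so every edge `u ⋖ v` labelled `ℓ` satisfies
`u ≤ m`, `v ≰ m`, `j ≤ v`, `j ≰ u`. The other generators lie below `m`; pushing an edge labelled `ℓ`
as high as possible inside `[x, y]` then forces it to end at `y`, which gives `cₐ`. Finally an
atom `f` of `[x, ⋀ cₐ]` would lie below the element `m` attached to `λ(x, f)` together with all of
`A`, hence below `y ≤ m`, which is impossible.
-/

section FiniteLattice

variable {L : Type u} [Lattice L] [Finite L]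

theorem infIrred_of_forall_covBy_eq {m e : L} (h : m ⋖ e) (huniq : ∀ e', m ⋖ e' → e' = e) :
    InfIrred m := by
  refine ⟨h.lt.not_isMax, fun b c hbc => ?_⟩
  by_contra! hne
  obtain ⟨e₁, hme₁, he₁b⟩ := exists_covBy_le_of_lt ((hbc ▸ inf_le_left).lt_of_ne' hne.1)
  obtain ⟨e₂, hme₂, he₂c⟩ := exists_covBy_le_of_lt ((hbc ▸ inf_le_right).lt_of_ne' hne.2)
  have heb : e ≤ b := huniq e₁ hme₁ ▸ he₁b
  have hec : e ≤ c := huniq e₂ hme₂ ▸ he₂c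
  exact h.lt.not_ge (hbc ▸ le_inf heb hec)

theorem supIrred_of_forall_covBy_eq {jm j : L} (h : jm ⋖ j) (huniq : ∀ u, u ⋖ j → u = jm) :
    SupIrred j :=
  infIrred_toDual.1 <| infIrred_of_forall_covBy_eq h.toDual fun _ hu => huniq _ hu.ofDual

theorem IsChain.exists_isMaxChainIn_superset {a b : L} {D : Set L} (hDab : D ⊆ Set.Icc a b)
    (hD : IsChain (· ≤ ·) D) : ∃ C, IsMaxChainIn a b C ∧ D ⊆ C := by
  obtain ⟨C, hDC, hC⟩ :=
    (Set.toFinite {C : Set L | C ⊆ Set.Icc a b ∧ IsChain (· ≤ ·) C}).exists_le_maximal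
      (a := D) ⟨hDab, hD⟩
  exact ⟨C, ⟨hC.prop.1, hC.prop.2, fun E hEab hE hCE => hC.eq_of_subset ⟨hEab, hE⟩ hCE⟩, hDC⟩

end FiniteLattice

namespace IsCNLabeling

variable {L : Type u} [Lattice L] [Finite L] {P : Type v} [PartialOrder P] {lam : L → L → P}

theorem exists_le_covBy_sup_label_eq (hlam : IsCNLabeling lam) {u v w : L} (hv : u ⋖ v)
    (hw : u ⋖ w) (hne : w ≠ v) : ∃ t, w ≤ t ∧ t ⋖ w ⊔ v ∧ lam t (w ⊔ v) = lam u v := by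
  have hvw : ¬v ≤ w := fun h => hw.2 hv.lt (h.lt_of_ne hne.symm)
  obtain ⟨t, hwt, ht⟩ := exists_le_covBy_of_lt (left_lt_sup.2 hvw)
  obtain ⟨C₁, hC₁, hwtC₁⟩ := IsChain.exists_isMaxChainIn_superset (a := u) (b := w ⊔ v)
    (Set.insert_subset ⟨hw.le, le_sup_left⟩ (Set.singleton_subset_iff.2 ⟨hw.le.trans hwt, ht.le⟩))
    (IsChain.pair hwt)
  obtain ⟨C₂, hC₂, hvC₂⟩ := IsChain.exists_isMaxChainIn_superset (a := u) (b := w ⊔ v)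
    (Set.singleton_subset_iff.2 ⟨hv.le, le_sup_right⟩) Set.subsingleton_singleton.isChain
  refine ⟨t, hwt, ht, ?_⟩
  exact (hlam.1 w v u hne hw hv C₁ C₂ hC₁ hC₂ (hwtC₁ (.inl rfl)) (hvC₂ rfl)).1 t
    (hwtC₁ (.inr rfl)) ht

theorem exists_inf_covBy_le_label_eq (hlam : IsCNLabeling lam) {u v w : L} (hu : u ⋖ v)
    (hw : w ⋖ v) (hne : w ≠ u) : ∃ t, w ⊓ u ⋖ t ∧ t ≤ w ∧ lam (w ⊓ u) t = lam u v := by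
  have hwu : ¬w ≤ u := fun h => hw.2 (h.lt_of_ne hne) hu.lt
  obtain ⟨t, ht, htw⟩ := exists_covBy_le_of_lt (inf_lt_left.2 hwu)
  obtain ⟨C₁, hC₁, htwC₁⟩ := IsChain.exists_isMaxChainIn_superset (a := w ⊓ u) (b := v)
    (Set.insert_subset ⟨ht.le, htw.trans hw.le⟩ (Set.singleton_subset_iff.2 ⟨inf_le_left, hw.le⟩))
    (IsChain.pair htw)
  obtain ⟨C₂, hC₂, huC₂⟩ := IsChain.exists_isMaxChainIn_superset (a := w ⊓ u) (b := v)
    (Set.singleton_subset_iff.2 ⟨inf_le_right, hu.le⟩) Set.subsingleton_singleton.isChain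
  refine ⟨t, ht, htw, ?_⟩
  exact (hlam.2 w u v hne hw hu C₁ C₂ hC₁ hC₂ (htwC₁ (.inr rfl)) (huC₂ rfl)).1 t
    (htwC₁ (.inl rfl)) ht

theorem exists_covBy_label_eq_of_lt_of_not_le (hlam : IsCNLabeling lam) {u v w : L}
    (huv : u ⋖ v) (huw : u < w) (hvw : ¬v ≤ w) :
    ∃ t t', u < t ∧ t ⋖ t' ∧ t' ≤ w ⊔ v ∧ lam t t' = lam u v := by
  obtain ⟨w', huw', hw'w⟩ := exists_covBy_le_of_lt huw
  obtain ⟨t, hw't, ht, hl⟩ :=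
    hlam.exists_le_covBy_sup_label_eq huv huw' fun h => hvw (h ▸ hw'w)
  exact ⟨t, w' ⊔ v, huw'.lt.trans_le hw't, ht, sup_le_sup_right hw'w v, hl⟩

theorem exists_infIrred_label_eq (hlam : IsCNLabeling lam) {u v : L} (huv : u ⋖ v) :
    ∃ m e, InfIrred m ∧ m ⋖ e ∧ u ≤ m ∧ ¬v ≤ m ∧ lam m e = lam u v := by
  induction u using WellFoundedGT.induction generalizing v with
  | _ u ih =>
  by_cases huniq : ∀ v', u ⋖ v' → v' = v
  · exact ⟨u, v, infIrred_of_forall_covBy_eq huv huniq, huv, le_rfl, huv.lt.not_ge, rfl⟩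
  push Not at huniq
  obtain ⟨w, huw, hne⟩ := huniq
  obtain ⟨t, hwt, ht, hlt⟩ := hlam.exists_le_covBy_sup_label_eq huv huw hne
  obtain ⟨m, e, hm, hme, htm, hm', hl⟩ := ih t (huw.lt.trans_le hwt) ht
  exact ⟨m, e, hm, hme, huw.le.trans (hwt.trans htm),
    fun hvm => hm' (sup_le (hwt.trans htm) hvm), hl.trans hlt⟩

theorem exists_supIrred_label_eq (hlam : IsCNLabeling lam) {u v : L} (huv : u ⋖ v) :
    ∃ jm j, SupIrred j ∧ jm ⋖ j ∧ j ≤ v ∧ ¬j ≤ u ∧ lam jm j = lam u v := by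
  induction u using WellFoundedLT.induction generalizing v with
  | _ u ih =>
  by_cases huniq : ∀ u', u' ⋖ v → u' = u
  · exact ⟨u, v, supIrred_of_forall_covBy_eq huv huniq, huv, le_rfl, huv.lt.not_ge, rfl⟩
  push Not at huniq
  obtain ⟨w, hwv, hne⟩ := huniq
  obtain ⟨t, ht, htw, hlt⟩ := hlam.exists_inf_covBy_le_label_eq huv hwv hne
  have hwu : w ⊓ u < u := inf_lt_right.2 fun h => huv.2 (h.lt_of_ne hne.symm) hwv.lt
  obtain ⟨jm, j, hj, hjmj, hjt, hj', hl⟩ := ih (w ⊓ u) hwu ht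
  exact ⟨jm, j, hj, hjmj, hjt.trans (htw.trans hwv.le),
    fun hju => hj' (le_inf (hjt.trans htw) hju), hl.trans hlt⟩

end IsCNLabeling

namespace IsCULabeling

variable {L : Type u} [Lattice L] [Finite L] {P : Type v} [PartialOrder P] {lam : L → L → P}

theorem le_infIrred_of_label_eq (hlam : IsCULabeling lam) {m e u v : L} (hm : InfIrred m)
    (hme : m ⋖ e) (huv : u ⋖ v) (hl : lam u v = lam m e) : u ≤ m ∧ ¬v ≤ m := by
  obtain ⟨m', e', hm', hme', hum', hvm', hl'⟩ := hlam.1.exists_infIrred_label_eq huv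
  obtain rfl : m' = m := by
    by_contra hne
    exact hlam.2.2 m' m e' e hm' hm hme' hme hne (hl'.trans hl)
  exact ⟨hum', hvm'⟩

theorem supIrred_le_of_label_eq (hlam : IsCULabeling lam) {jm j u v : L} (hj : SupIrred j)
    (hjmj : jm ⋖ j) (huv : u ⋖ v) (hl : lam u v = lam jm j) : j ≤ v ∧ ¬j ≤ u := by
  obtain ⟨jm', j', hj', hjmj', hjv', hju', hl'⟩ := hlam.1.exists_supIrred_label_eq huv
  obtain rfl : j' = j := by
    by_contra hne
    exact hlam.2.1 j' j jm' jm hj' hj hjmj' hjmj hne (hl'.trans hl)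
  exact ⟨hjv', hju'⟩

theorem le_of_covBy_of_label_eq (hlam : IsCULabeling lam) {m e x f b : L} (hm : InfIrred m)
    (hme : m ⋖ e) (hxf : x ⋖ f) (hl : lam x f = lam m e) (hxb : x ⋖ b) (hbf : b ≠ f) :
    b ≤ m := by
  obtain ⟨t, hbt, ht, hlt⟩ := hlam.1.exists_le_covBy_sup_label_eq hxf hxb hbf
  exact hbt.trans (hlam.le_infIrred_of_label_eq hm hme ht (hlt.trans hl)).1

theorem exists_coatom_label_eq_of_isLUB {A : Set L} {x y a : L} (hlam : IsCULabeling lam)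
    (hcov : ∀ b ∈ A, x ⋖ b) (hy : IsLUB A y) (ha : a ∈ A) :
    ∃ c, c ⋖ y ∧ x ≤ c ∧ ¬a ≤ c ∧ lam x a = lam c y := by
  have hxa := hcov a ha
  obtain ⟨m, e, hm, hme, -, ham, hlm⟩ := hlam.1.exists_infIrred_label_eq hxa
  obtain ⟨jm, j, hj, hjmj, hja, hjx, hlj⟩ := hlam.1.exists_supIrred_label_eq hxa
  have hxja : x ⊔ j = a :=
    (hxa.eq_or_eq le_sup_left (sup_le hxa.le hja)).resolve_left fun h => hjx (sup_eq_left.1 h)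
  have hAm : ∀ b ∈ A, b ≠ a → b ≤ m := fun b hb hba =>
    hlam.le_of_covBy_of_label_eq hm hme hxa hlm.symm (hcov b hb) hba
  obtain ⟨u, -, hu⟩ :=
    (Set.toFinite {u | x ≤ u ∧ ∃ v, u ⋖ v ∧ v ≤ y ∧ lam u v = lam x a}).exists_le_maximal
      (a := x) ⟨le_rfl, a, hxa, hy.1 ha, rfl⟩
  obtain ⟨hxu, v, huv, hvy, hl⟩ := hu.prop
  obtain ⟨hum, hvm⟩ := hlam.le_infIrred_of_label_eq hm hme huv (hl.trans hlm.symm)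
  have hjv := (hlam.supIrred_le_of_label_eq hj hjmj huv (hl.trans hlj.symm)).1
  have hAv : ∀ b ∈ A, b ≤ v := by
    intro b hb
    rcases eq_or_ne b a with rfl | hba
    · exact hxja ▸ sup_le (hxu.trans huv.le) hjv
    by_contra hbv
    -- otherwise the edge `u ⋖ v` could be pushed above `u` inside `[x, y]`
    obtain ⟨t, t', hut, htt', ht'y, hlt⟩ := hlam.1.exists_covBy_label_eq_of_lt_of_not_le huv
      (left_lt_sup.2 fun h => hbv (h.trans huv.le))
      fun h => hvm (h.trans (sup_le hum (hAm b hb hba)))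
    have ht'y : t' ≤ y := ht'y.trans (sup_le (sup_le (huv.le.trans hvy) (hy.1 hb)) hvy)
    exact hut.not_ge (hu.2 ⟨hxu.trans hut.le, t', htt', ht'y, hlt.trans hl⟩ hut.le)
  obtain rfl : v = y := le_antisymm hvy (hy.2 hAv)
  exact ⟨u, huv, hxu, fun hau => ham (hau.trans hum), hl.symm⟩

theorem isGLB_image {A : Set L} {x y : L} {g : L → L} (hlam : IsCULabeling lam)
    (hA : A.Nonempty) (hcov : ∀ a ∈ A, x ⋖ a) (hy : IsLUB A y) (hgy : ∀ a ∈ A, g a ≤ y)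
    (hxg : ∀ a ∈ A, x ≤ g a) (hag : ∀ a ∈ A, ¬a ≤ g a) : IsGLB (g '' A) x := by
  refine ⟨Set.forall_mem_image.2 hxg, fun z hz => ?_⟩
  by_contra hzx
  obtain ⟨f, hxf, hfz⟩ := exists_covBy_le_of_lt (left_lt_sup.2 hzx)
  have hfg : ∀ a ∈ A, f ≤ g a := fun a ha =>
    hfz.trans (sup_le (hxg a ha) (hz (Set.mem_image_of_mem g ha)))
  obtain ⟨m, e, hm, hme, -, hfm, hl⟩ := hlam.1.exists_infIrred_label_eq hxf
  have hym : y ≤ m := hy.2 fun a ha =>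
    hlam.le_of_covBy_of_label_eq hm hme hxf hl.symm (hcov a ha) fun h => hag a ha (h ▸ hfg a ha)
  obtain ⟨a, ha⟩ := hA
  exact hfm (((hfg a ha).trans (hgy a ha)).trans hym)

end IsCULabeling

theorem cu_labeling_facial_interval_general
    {L : Type u} [Lattice L] [Fintype L] {P : Type v} [PartialOrder P]
    (lam : L → L → P) (hlam : IsCULabeling lam) {x y : L}
    (A : Finset L) (hA : A.Nonempty) (hcov : ∀ a ∈ A, x ⋖ a)
    (hy : IsLUB (A : Set L) y) :
    ∃ g : L → L, (∀ a ∈ A, g a ⋖ y) ∧ IsGLB (g '' (A : Set L)) x ∧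
      ∀ a ∈ A, lam x a = lam (g a) y := by
  choose! g hgy hxg hag hlg using fun a (ha : a ∈ A) => hlam.exists_coatom_label_eq_of_isLUB hcov hy ha
  exact ⟨g, hgy, hlam.isGLB_image (Finset.coe_nonempty.2 hA) hcov hy (fun a ha => (hgy a ha).le)
    hxg hag, hlg⟩

/-- If `y` is the join of distinct elements `a₁, …, a_l` covering `x`,
then there are elements `c₁, …, c_l` covered by `y` whose meet is `x`, with
`λ(x, aᵢ) = λ(cᵢ, y)` for all `i`. -/
theorem cu_labeling_facial_interval
    {L : Type u} [Lattice L] [Fintype L] {P : Type v} [PartialOrder P]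
    (lam : L → L → P) (hlam : IsCULabeling lam) {x y : L} (hxy : x ≤ y)
    (A : Finset L) (hA : A.Nonempty) (hcov : ∀ a ∈ A, x ⋖ a)
    (hy : IsLUB (A : Set L) y) :
    ∃ g : L → L, (∀ a ∈ A, g a ⋖ y) ∧ IsGLB (g '' (A : Set L)) x ∧
      ∀ a ∈ A, lam x a = lam (g a) y :=
  cu_labeling_facial_interval_general lam hlam A hA hcov hy
end
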